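/- Let Λ = ℚ[t,t⁻¹] and H a finitely generated torsion Λ-module. Then Hom_Λ(H, Q(Λ)/Λ) and Hom_ℚ(H, ℚ) are isomorphic as ℚ-vector spaces. -/

import Mathlib

open LaurentPolynomial CategoryTheory

noncomputable section

/-- Λ = ℚ[t,t⁻¹], the ring of Laurent polynomials over ℚ. -/
abbrev Λ : Type := LaurentPolynomial ℚ

instance : IsDomain Λ := NoZeroDivisors.to_isDomain _

/-- `IsOrderIdeal M Δ` : `M` is a finitely generated torsion `Λ`-module, isomorphic to
`⊕ⱼ Λ/(pⱼ)` with all `pⱼ ≠ 0`, and `Δ` generates its order ideal, i.e. `Δ` is associated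
(equal up to units of `Λ`) to `∏ⱼ pⱼ`. -/
def IsOrderIdeal (M : Type*) [AddCommGroup M] [Module Λ M] (Δ : Λ) : Prop :=
  ∃ (n : ℕ) (p : Fin n → Λ), (∀ i, p i ≠ 0) ∧
    Nonempty (M ≃ₗ[Λ] Π i : Fin n, Λ ⧸ Ideal.span {p i}) ∧
    Associated Δ (∏ i, p i)

/-- The field of fractions Q(Λ) of Λ. -/
abbrev QΛ : Type := FractionRing Λ

/-- Λ viewed as a Λ-submodule of Q(Λ). -/
abbrev ΛinQΛ : Submodule Λ QΛ := LinearMap.range (Algebra.linearMap Λ QΛ)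

/-- The quotient Λ-module Q(Λ)/Λ. -/
abbrev QmodΛ : Type := QΛ ⧸ ΛinQΛ

/-! Over a principal ideal domain `R` with fraction field `K`, a finitely generated torsion module
is `⨁ R/(qᵢ)`, and `Hom_R(R/(q), K/R)` is the `q`-torsion of `K/R`, namely `q⁻¹R/R ≅ R/(q)`.
Hence `Hom_Λ(H, Q(Λ)/Λ) ≅ H`. Each `Λ/(q)` is finite-dimensional over `ℚ`, so `H` is, and a
finite-dimensional space is isomorphic to its dual. -/

open Submodule

section HomQuotient

variable {R : Type*} [CommRing R]

def homQuotSpanSingletonEquiv (M : Type*) [AddCommGroup M] [Module R M] (q : R) :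
    (R ⧸ R ∙ q →ₗ[R] M) ≃ₗ[R] torsionBy R M q where
  toFun φ := ⟨φ (Submodule.Quotient.mk 1), by
    rw [mem_torsionBy_iff, ← map_smul, ← Submodule.Quotient.mk_smul, smul_eq_mul, mul_one,
      (Submodule.Quotient.mk_eq_zero _).mpr (mem_span_singleton_self q), map_zero]⟩
  map_add' _ _ := rfl
  map_smul' _ _ := rfl
  invFun m := liftQSpanSingleton q (LinearMap.toSpanSingleton R M m)
    ((mem_torsionBy_iff q _).mp m.2)
  left_inv φ := linearMap_qext _ <| LinearMap.ext_ring <| one_smul R _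
  right_inv m := Subtype.ext <| one_smul R _

variable (K : Type*) [Field K] [Algebra R K]

def mkDiv (q : R) : R →ₗ[R] K ⧸ LinearMap.range (Algebra.linearMap R K) :=
  (LinearMap.range (Algebra.linearMap R K)).mkQ ∘ₗ
    LinearMap.toSpanSingleton R K (algebraMap R K q)⁻¹

variable {K}

theorem mkDiv_apply (q a : R) :
    mkDiv K q a = Submodule.Quotient.mk (algebraMap R K a / algebraMap R K q) := by
  simp [mkDiv, Algebra.smul_def, div_eq_mul_inv]

theorem mk_eq_zero_iff_exists_algebraMap_eq {x : K} :
    Submodule.Quotient.mk x = (0 : K ⧸ LinearMap.range (Algebra.linearMap R K)) ↔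
      ∃ b, algebraMap R K b = x := by
  simp [Submodule.Quotient.mk_eq_zero]

variable [IsFractionRing R K] {q : R}

theorem ker_mkDiv (hq : q ≠ 0) : LinearMap.ker (mkDiv K q) = R ∙ q := by
  have hq' : algebraMap R K q ≠ 0 := (map_ne_zero_iff _ (IsFractionRing.injective R K)).mpr hq
  ext a
  simp only [LinearMap.mem_ker, mkDiv_apply, mk_eq_zero_iff_exists_algebraMap_eq, mem_span_singleton,
    eq_div_iff hq', ← map_mul, (IsFractionRing.injective R K).eq_iff, smul_eq_mul]

theorem range_mkDiv (hq : q ≠ 0) : LinearMap.range (mkDiv K q) = torsionBy R _ q := by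
  refine le_antisymm ?_ fun y hy ↦ ?_
  · rintro _ ⟨a, rfl⟩
    rw [mem_torsionBy_iff, ← map_smul, ← LinearMap.mem_ker, ker_mkDiv hq]
    exact mem_span_singleton.mpr ⟨a, mul_comm a q⟩
  · obtain ⟨x, rfl⟩ := Submodule.Quotient.mk_surjective _ y
    rw [mem_torsionBy_iff, ← Submodule.Quotient.mk_smul, mk_eq_zero_iff_exists_algebraMap_eq] at hy
    obtain ⟨b, hb⟩ := hy
    refine ⟨b, ?_⟩
    rw [mkDiv_apply, hb, Algebra.smul_def,
      mul_div_cancel_left₀ _ ((map_ne_zero_iff _ (IsFractionRing.injective R K)).mpr hq)]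

variable (K)

def quotSpanSingletonEquivTorsionBy (hq : q ≠ 0) :
    (R ⧸ R ∙ q) ≃ₗ[R] torsionBy R (K ⧸ LinearMap.range (Algebra.linearMap R K)) q :=
  (quotEquivOfEq _ _ (ker_mkDiv hq).symm).trans <|
    (mkDiv K q).quotKerEquivRange.trans (LinearEquiv.ofEq _ _ (range_mkDiv hq))

def homQuotSpanSingletonEquivSelf (hq : q ≠ 0) :
    (R ⧸ R ∙ q →ₗ[R] K ⧸ LinearMap.range (Algebra.linearMap R K)) ≃ₗ[R] R ⧸ R ∙ q :=
  (homQuotSpanSingletonEquiv _ q).trans (quotSpanSingletonEquivTorsionBy K hq).symm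

def homPiQuotSpanSingletonEquivSelf {ι : Type*} [Fintype ι] [DecidableEq ι] {q : ι → R}
    (hq : ∀ i, q i ≠ 0) :
    ((Π i, R ⧸ R ∙ q i) →ₗ[R] K ⧸ LinearMap.range (Algebra.linearMap R K)) ≃ₗ[R]
      Π i, R ⧸ R ∙ q i :=
  (LinearMap.lsum R _ R).symm.trans <|
    LinearEquiv.piCongrRight fun i ↦ homQuotSpanSingletonEquivSelf K (hq i)

end HomQuotient

section PID

universe u

variable {R : Type u} [CommRing R] [IsDomain R] [IsPrincipalIdealRing R]
  {M : Type*} [AddCommGroup M] [Module R M] [Module.Finite R M]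

theorem Module.exists_linearEquiv_pi_quotient_of_isTorsion (hM : Module.IsTorsion R M) :
    ∃ (ι : Type u) (_ : Fintype ι) (q : ι → R), (∀ i, q i ≠ 0) ∧
      Nonempty (M ≃ₗ[R] Π i, R ⧸ R ∙ q i) := by
  obtain ⟨ι, _, p, hp, e, ⟨l⟩⟩ := Module.equiv_directSum_of_isTorsion hM
  exact ⟨ι, inferInstance, fun i ↦ p i ^ e i, fun i ↦ pow_ne_zero _ (hp i).ne_zero,
    ⟨l.trans (DirectSum.linearEquivFunOnFintype R ι _)⟩⟩

theorem nonempty_homFractionQuotient_equiv_self_of_isTorsion (K : Type*) [Field K] [Algebra R K]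
    [IsFractionRing R K] (hM : Module.IsTorsion R M) :
    Nonempty ((M →ₗ[R] K ⧸ LinearMap.range (Algebra.linearMap R K)) ≃ₗ[R] M) := by
  classical
  obtain ⟨ι, _, q, hq, ⟨e⟩⟩ := Module.exists_linearEquiv_pi_quotient_of_isTorsion hM
  exact ⟨(e.arrowCongr (.refl R _)).trans ((homPiQuotSpanSingletonEquivSelf K hq).trans e.symm)⟩

end PID

theorem IsLocalization.isPrincipalIdealRing {R S : Type*} [CommRing R] [CommRing S] [Algebra R S]
    (M : Submonoid R) [IsLocalization M S] [IsPrincipalIdealRing R] : IsPrincipalIdealRing S where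
  principal I := by
    obtain ⟨g, hg⟩ := IsPrincipalIdealRing.principal (I.under R)
    refine ⟨algebraMap R S g, ?_⟩
    rw [← IsLocalization.map_under M S I, hg, ← Ideal.span, Ideal.map_span, Set.image_singleton]

namespace LaurentPolynomial

variable {k : Type*} [Field k]

instance : IsPrincipalIdealRing k[T;T⁻¹] :=
  IsLocalization.isPrincipalIdealRing (Submonoid.powers (Polynomial.X : Polynomial k))

theorem finiteDimensional_quotient_span_singleton {q : k[T;T⁻¹]} (hq : q ≠ 0) :
    FiniteDimensional k (k[T;T⁻¹] ⧸ Ideal.span {q}) := by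
  -- `k[T;T⁻¹]` is a PID, hence of Krull dimension one, so `k[T;T⁻¹]/(q)` has finite length.
  have hlen := isFiniteLength_quotient_span_singleton _ (mem_nonZeroDivisors_of_ne_zero hq)
  have : IsArtinianRing (k[T;T⁻¹] ⧸ Ideal.span {q}) :=
    isArtinian_of_tower k[T;T⁻¹] (isFiniteLength_iff_isNoetherian_isArtinian.mp hlen).2
  exact Module.finite_of_isArtinianRing k _

theorem finiteDimensional_of_isTorsion (M : Type*) [AddCommGroup M] [Module k[T;T⁻¹] M]
    [Module.Finite k[T;T⁻¹] M] [Module k M] [IsScalarTower k k[T;T⁻¹] M]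
    (hM : Module.IsTorsion k[T;T⁻¹] M) : FiniteDimensional k M := by
  obtain ⟨ι, _, q, hq, ⟨e⟩⟩ := Module.exists_linearEquiv_pi_quotient_of_isTorsion hM
  have := fun i ↦ finiteDimensional_quotient_span_singleton (hq i)
  exact .equiv (e.restrictScalars k).symm

end LaurentPolynomial

/-- For a finitely generated torsion Λ-module H, the Λ-module Hom_Λ(H, Q(Λ)/Λ) is
isomorphic as a ℚ-vector space to Hom_ℚ(H, ℚ). -/
theorem homQmodL_iso_qDual
    (H : Type) [AddCommGroup H] [Module Λ H] [Module.Finite Λ H]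
    [Module ℚ H] [IsScalarTower ℚ Λ H]
    (htor : Module.IsTorsion Λ H) :
    Nonempty ((H →ₗ[Λ] QmodΛ) ≃ₗ[ℚ] (H →ₗ[ℚ] ℚ)) := by
  have := LaurentPolynomial.finiteDimensional_of_isTorsion H htor
  obtain ⟨e⟩ := nonempty_homFractionQuotient_equiv_self_of_isTorsion QΛ htor
  exact ⟨(e.restrictScalars ℚ).trans (Module.finBasis ℚ H).toDualEquiv⟩
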